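/- Let a ∈ [0,1], let Φ_a : M₂(ℂ) → M₂(ℂ) be the dephasing channel, let H = σ₃ and E ∈ [−1,0], and write |E| = −E. Then for every δ with √(2(1 − |E|)) ≤ δ ≤ 2√(1 − |E|²), the Dobrushin curve of Φ_a satisfies F_E(δ) ≥ h_E(δ), where h_E(δ) = √[(|E| + cos(2 arccos(δ/2) + arccos|E|))² + a²(√(1 − |E|²) + sin(2 arccos(δ/2) + arccos|E|))²]. -/

import Mathlib

/-!
Take the Bloch vector `v = (sin φ, 0, -cos φ)` with `φ = arccos |E|`, which lies on the energy
boundary `w₃ = E`, and rotate it in the `x`–`z` plane by the angle `2θ`, `θ = arccos (δ/2)`, to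
get `u`. The chord `u - v` has length `2 cos θ = δ`, and the range of `δ` puts `θ + φ` in
`[π/2, π]`, so `u₃ + |E| = 2 cos (θ + φ) cos θ ≤ 0` and `u` also satisfies the energy
constraint. Since `Φ_a` scales the first two Bloch coordinates by `a`, the output trace distance
of this pair is `h_E(δ)`. Finally, for any linear map the output trace distances of states are
bounded, since density matrices have entries of modulus at most `1` and `‖A‖₁ ≤ d² max |Aᵢⱼ|`.
-/

open scoped ComplexOrder

/-- The trace norm `‖A‖₁ = tr √(A†A)` of a complex matrix. -/
noncomputable def traceNorm {d : ℕ} (A : Matrix (Fin d) (Fin d) ℂ) : ℝ :=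
  (((Matrix.posSemidef_conjTranspose_mul_self A).1.eigenvectorUnitary : Matrix (Fin d) (Fin d) ℂ) *
    Matrix.diagonal ((fun x : ℝ => (x : ℂ)) ∘ Real.sqrt ∘ (Matrix.posSemidef_conjTranspose_mul_self A).1.eigenvalues) *
    (star ((Matrix.posSemidef_conjTranspose_mul_self A).1.eigenvectorUnitary :
      Matrix (Fin d) (Fin d) ℂ))).trace.re

/-- A density matrix: positive semidefinite with unit trace. -/
def IsDensity {d : ℕ} (ρ : Matrix (Fin d) (Fin d) ℂ) : Prop :=
  ρ.PosSemidef ∧ ρ.trace = 1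

/-- The Pauli matrix `σ₁`. -/
def pauli1 : Matrix (Fin 2) (Fin 2) ℂ := !![0, 1; 1, 0]

/-- The Pauli matrix `σ₂`. -/
def pauli2 : Matrix (Fin 2) (Fin 2) ℂ := !![0, -Complex.I; Complex.I, 0]

/-- The Pauli matrix `σ₃`. -/
def pauli3 : Matrix (Fin 2) (Fin 2) ℂ := !![1, 0; 0, -1]

/-- The dephasing channel with parameter `a`: the (complex-linear) map acting on the Pauli
basis by `α₀I + α₁σ₁ + α₂σ₂ + α₃σ₃ ↦ α₀I + a(α₁σ₁ + α₂σ₂) + α₃σ₃`. -/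
def IsDephasing (a : ℝ) (Φ : Matrix (Fin 2) (Fin 2) ℂ →ₗ[ℂ] Matrix (Fin 2) (Fin 2) ℂ) : Prop :=
  ∀ α : Fin 4 → ℝ,
    Φ ((α 0 : ℂ) • 1 + (α 1 : ℂ) • pauli1 + (α 2 : ℂ) • pauli2 + (α 3 : ℂ) • pauli3) =
      (α 0 : ℂ) • 1 + ((a : ℂ) * (α 1 : ℂ)) • pauli1 + ((a : ℂ) * (α 2 : ℂ)) • pauli2 +
        (α 3 : ℂ) • pauli3

/-- The qubit state with Bloch vector `(w₁, w₂, w₃)`: `ρ = ½(I + w₁σ₁ + w₂σ₂ + w₃σ₃)`. -/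
noncomputable def blochState (w₁ w₂ w₃ : ℝ) : Matrix (Fin 2) (Fin 2) ℂ :=
  (1 / 2 : ℂ) • ((1 : Matrix (Fin 2) (Fin 2) ℂ) +
    (w₁ : ℂ) • pauli1 + (w₂ : ℂ) • pauli2 + (w₃ : ℂ) • pauli3)

/-- The Dobrushin curve `F_E(δ)` of a map `Φ` with respect to the Hamiltonian `H` and the
energy bound `E`. -/
noncomputable def dobrushinCurve {d : ℕ}
    (Φ : Matrix (Fin d) (Fin d) ℂ → Matrix (Fin d) (Fin d) ℂ)
    (H : Matrix (Fin d) (Fin d) ℂ) (E δ : ℝ) : ℝ :=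
  sSup {r | ∃ ρ₀ ρ₁ : Matrix (Fin d) (Fin d) ℂ, IsDensity ρ₀ ∧ IsDensity ρ₁ ∧
    ((ρ₀ * H).trace).re ≤ E ∧ ((ρ₁ * H).trace).re ≤ E ∧
    traceNorm (ρ₀ - ρ₁) ≤ δ ∧ r = traceNorm (Φ ρ₀ - Φ ρ₁)}

open Matrix Real

theorem traceNorm_eq_sum_sqrt_eigenvalues {d : ℕ} (A : Matrix (Fin d) (Fin d) ℂ) :
    traceNorm A = ∑ i, √((posSemidef_conjTranspose_mul_self A).1.eigenvalues i) := by
  rw [traceNorm, trace_mul_cycle, Unitary.coe_star_mul_self, one_mul, trace_diagonal,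
    Complex.re_sum]
  simp

theorem traceNorm_of_conjTranspose_mul_self_eq_smul_one {d : ℕ} {A : Matrix (Fin d) (Fin d) ℂ}
    {c : ℝ} (h : Aᴴ * A = (c : ℂ) • 1) : traceNorm A = d * √c := by
  have hA := (posSemidef_conjTranspose_mul_self A).1
  have hdiag : diagonal (RCLike.ofReal ∘ hA.eigenvalues) =
      (c : ℂ) • (1 : Matrix (Fin d) (Fin d) ℂ) := by
    rw [← hA.conjStarAlgAut_star_eigenvectorUnitary]
    exact (congrArg (Unitary.conjStarAlgAut ℂ _ (star hA.eigenvectorUnitary)) h).trans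
      (by rw [map_smul, map_one])
  have heig : ∀ i, hA.eigenvalues i = c := fun i => by
    simpa using congrFun (congrFun hdiag i) i
  simp [traceNorm_eq_sum_sqrt_eigenvalues, heig]

theorem re_trace_conjTranspose_mul_self {m n : Type*} [Fintype m] [Fintype n]
    (A : Matrix m n ℂ) : (Aᴴ * A).trace.re = ∑ i, ∑ j, ‖A j i‖ ^ 2 := by
  simp only [trace, diag, mul_apply, conjTranspose_apply, Complex.re_sum]
  simp [Complex.sq_norm, Complex.normSq_apply, Complex.mul_re]

theorem IsDensity.apply_self_le_one {d : ℕ} {ρ : Matrix (Fin d) (Fin d) ℂ} (h : IsDensity ρ)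
    (i : Fin d) : ρ i i ≤ 1 := by
  rw [← h.2]
  exact Finset.single_le_sum (f := fun k => ρ k k) (fun _ _ => h.1.diag_nonneg) (Finset.mem_univ i)

theorem IsDensity.norm_apply_le_one {d : ℕ} {ρ : Matrix (Fin d) (Fin d) ℂ} (h : IsDensity ρ)
    (i j : Fin d) : ‖ρ i j‖ ≤ 1 := by
  have hdet := (h.1.submatrix ![i, j]).det_nonneg
  simp only [det_fin_two, submatrix_apply, cons_val_zero, cons_val_one] at hdet
  rw [← h.1.1.apply i j, Complex.star_def, Complex.conj_mul'] at hdet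
  rw [← h.1.1.apply i j, norm_star]
  have hsq : ((‖ρ j i‖ ^ 2 : ℝ) : ℂ) ≤ 1 := by
    push_cast
    calc _ ≤ ρ i i * ρ j j := by linear_combination hdet
      _ ≤ 1 := mul_le_one₀ (h.apply_self_le_one i) h.1.diag_nonneg (h.apply_self_le_one j)
  exact (pow_le_one_iff_of_nonneg (norm_nonneg _) two_ne_zero).1 (by exact_mod_cast hsq)

section SupNorm

attribute [local instance] Matrix.normedAddCommGroup Matrix.normedSpace

theorem traceNorm_le_sq_mul_norm {d : ℕ} (A : Matrix (Fin d) (Fin d) ℂ) :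
    traceNorm A ≤ d ^ 2 * ‖A‖ := by
  have hA := posSemidef_conjTranspose_mul_self A
  have hsum : ∑ i, hA.1.eigenvalues i ≤ (d * ‖A‖) ^ 2 := by
    have htr : ∑ i, hA.1.eigenvalues i = ∑ i, ∑ j, ‖A j i‖ ^ 2 := by
      rw [← re_trace_conjTranspose_mul_self, hA.1.trace_eq_sum_eigenvalues, Complex.re_sum]
      simp
    calc ∑ i, hA.1.eigenvalues i ≤ ∑ _i : Fin d, ∑ _j : Fin d, ‖A‖ ^ 2 := by
          rw [htr]
          gcongr
          exact norm_entry_le_entrywise_sup_norm A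
      _ = (d * ‖A‖) ^ 2 := by
        simp only [Finset.sum_const, Finset.card_univ, Fintype.card_fin, nsmul_eq_mul]
        ring
  have heig : ∀ i, √(hA.1.eigenvalues i) ≤ d * ‖A‖ := fun i =>
    (sqrt_le_left (by positivity)).2 <|
      (Finset.single_le_sum (fun j _ => hA.eigenvalues_nonneg j) (Finset.mem_univ i)).trans hsum
  calc traceNorm A ≤ ∑ _i : Fin d, d * ‖A‖ := by
        rw [traceNorm_eq_sum_sqrt_eigenvalues]
        exact Finset.sum_le_sum fun i _ => heig i
    _ = d ^ 2 * ‖A‖ := by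
        simp only [Finset.sum_const, Finset.card_univ, Fintype.card_fin, nsmul_eq_mul]
        ring

theorem Matrix.norm_linearMap_apply_le {m n F : Type*} [Fintype m] [Fintype n] [DecidableEq m]
    [DecidableEq n] [NormedAddCommGroup F] [NormedSpace ℂ F] (Φ : Matrix m n ℂ →ₗ[ℂ] F)
    (X : Matrix m n ℂ) : ‖Φ X‖ ≤ ‖X‖ * ∑ i, ∑ j, ‖Φ (single i j 1)‖ := by
  conv_lhs => rw [matrix_eq_sum_single X]
  simp only [map_sum, Finset.mul_sum]
  refine (norm_sum_le _ _).trans (Finset.sum_le_sum fun i _ => (norm_sum_le _ _).trans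
    (Finset.sum_le_sum fun j _ => ?_))
  rw [← mul_one (X i j), ← smul_eq_mul, ← smul_single, map_smul, norm_smul]
  gcongr
  exact norm_entry_le_entrywise_sup_norm X

theorem IsDensity.norm_le_one {d : ℕ} {ρ : Matrix (Fin d) (Fin d) ℂ} (h : IsDensity ρ) :
    ‖ρ‖ ≤ 1 :=
  (norm_le_iff zero_le_one).2 h.norm_apply_le_one

theorem traceNorm_map_sub_map_le {d : ℕ}
    (Φ : Matrix (Fin d) (Fin d) ℂ →ₗ[ℂ] Matrix (Fin d) (Fin d) ℂ)
    {ρ₀ ρ₁ : Matrix (Fin d) (Fin d) ℂ} (h₀ : IsDensity ρ₀) (h₁ : IsDensity ρ₁) :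
    traceNorm (Φ ρ₀ - Φ ρ₁) ≤ d ^ 2 * (2 * ∑ i, ∑ j, ‖Φ (single i j 1)‖) := by
  calc traceNorm (Φ ρ₀ - Φ ρ₁) ≤ d ^ 2 * ‖Φ (ρ₀ - ρ₁)‖ := by
        rw [map_sub]
        exact traceNorm_le_sq_mul_norm _
    _ ≤ d ^ 2 * (2 * ∑ i, ∑ j, ‖Φ (single i j 1)‖) := by
        gcongr
        refine (norm_linearMap_apply_le Φ _).trans ?_
        gcongr
        linarith [norm_sub_le ρ₀ ρ₁, h₀.norm_le_one, h₁.norm_le_one]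

/- `sSup` of a set that is not bounded above is `0`; the uniform bound on output trace norms
is what makes every admissible pair of states a lower bound for the Dobrushin curve. -/
theorem traceNorm_le_dobrushinCurve {d : ℕ}
    (Φ : Matrix (Fin d) (Fin d) ℂ →ₗ[ℂ] Matrix (Fin d) (Fin d) ℂ) {H : Matrix (Fin d) (Fin d) ℂ}
    {E δ : ℝ} {ρ₀ ρ₁ : Matrix (Fin d) (Fin d) ℂ} (h₀ : IsDensity ρ₀) (h₁ : IsDensity ρ₁)
    (hE₀ : ((ρ₀ * H).trace).re ≤ E) (hE₁ : ((ρ₁ * H).trace).re ≤ E)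
    (hδ : traceNorm (ρ₀ - ρ₁) ≤ δ) :
    traceNorm (Φ ρ₀ - Φ ρ₁) ≤ dobrushinCurve Φ H E δ := by
  refine le_csSup ⟨d ^ 2 * (2 * ∑ i, ∑ j, ‖Φ (single i j 1)‖), ?_⟩
    ⟨ρ₀, ρ₁, h₀, h₁, hE₀, hE₁, hδ, rfl⟩
  rintro _ ⟨σ₀, σ₁, hσ₀, hσ₁, -, -, -, rfl⟩
  exact traceNorm_map_sub_map_le Φ hσ₀ hσ₁

end SupNorm

theorem Matrix.IsHermitian.posSemidef_of_trace_nonneg_of_det_nonneg {𝕜 : Type*} [RCLike 𝕜]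
    {A : Matrix (Fin 2) (Fin 2) 𝕜} (hA : A.IsHermitian) (htr : 0 ≤ RCLike.re A.trace)
    (hdet : 0 ≤ RCLike.re A.det) : A.PosSemidef := by
  rw [hA.posSemidef_iff_eigenvalues_nonneg]
  rw [hA.trace_eq_sum_eigenvalues, Fin.sum_univ_two] at htr
  rw [hA.det_eq_prod_eigenvalues, Fin.prod_univ_two] at hdet
  simp only [map_add, RCLike.ofReal_re, ← RCLike.ofReal_mul] at htr hdet
  intro i
  fin_cases i <;> simp <;> nlinarith

theorem blochState_eq (w₁ w₂ w₃ : ℝ) :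
    blochState w₁ w₂ w₃ =
      !![(1 + w₃ : ℂ) / 2, (w₁ - w₂ * Complex.I) / 2;
        (w₁ + w₂ * Complex.I) / 2, (1 - w₃ : ℂ) / 2] := by
  ext i j
  fin_cases i <;> fin_cases j <;> simp [blochState, pauli1, pauli2, pauli3] <;> ring

theorem isDensity_blochState {w₁ w₂ w₃ : ℝ} (hw : w₁ ^ 2 + w₂ ^ 2 + w₃ ^ 2 ≤ 1) :
    IsDensity (blochState w₁ w₂ w₃) := by
  have htr : (blochState w₁ w₂ w₃).trace = 1 := by
    simp only [blochState_eq, trace_fin_two, of_apply, cons_val', cons_val_zero, cons_val_fin_one,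
      cons_val_one]
    ring
  refine ⟨IsHermitian.posSemidef_of_trace_nonneg_of_det_nonneg ?_ ?_ ?_, htr⟩
  · ext i j
    fin_cases i <;> fin_cases j <;> simp [blochState_eq, Complex.ext_iff]
  · simp [htr]
  · simp [blochState_eq, det_fin_two]
    nlinarith

theorem re_trace_blochState_mul_pauli3 (w₁ w₂ w₃ : ℝ) :
    ((blochState w₁ w₂ w₃ * pauli3).trace).re = w₃ := by
  simp [blochState_eq, pauli3, trace_fin_two]
  ring

theorem traceNorm_blochState_sub (u₁ u₂ u₃ v₁ v₂ v₃ : ℝ) :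
    traceNorm (blochState u₁ u₂ u₃ - blochState v₁ v₂ v₃) =
      √((u₁ - v₁) ^ 2 + (u₂ - v₂) ^ 2 + (u₃ - v₃) ^ 2) := by
  set s := (u₁ - v₁) ^ 2 + (u₂ - v₂) ^ 2 + (u₃ - v₃) ^ 2
  have hsq : (blochState u₁ u₂ u₃ - blochState v₁ v₂ v₃)ᴴ *
      (blochState u₁ u₂ u₃ - blochState v₁ v₂ v₃) = ((s / 4 : ℝ) : ℂ) • 1 := by
    ext i j
    fin_cases i <;> fin_cases j <;>
      simp [blochState_eq, mul_apply, Complex.ext_iff, map_ofNat, s, sq] <;>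
      constructor <;> ring
  have hs : s / 4 = (√s / 2) ^ 2 := by
    rw [div_pow, sq_sqrt (by positivity)]
    norm_num
  rw [traceNorm_of_conjTranspose_mul_self_eq_smul_one hsq, hs, sqrt_sq (by positivity)]
  push_cast
  ring

theorem IsDephasing.map_blochState {a : ℝ}
    {Φ : Matrix (Fin 2) (Fin 2) ℂ →ₗ[ℂ] Matrix (Fin 2) (Fin 2) ℂ} (hΦ : IsDephasing a Φ)
    (w₁ w₂ w₃ : ℝ) : Φ (blochState w₁ w₂ w₃) = blochState (a * w₁) (a * w₂) w₃ := by
  have h := hΦ ![1, w₁, w₂, w₃]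
  simp only [cons_val_zero, cons_val_one, cons_val_two, cons_val_three, head_cons, tail_cons,
    Complex.ofReal_one, one_smul] at h
  rw [blochState, map_smul, h, blochState]
  push_cast
  rfl

theorem IsDephasing.le_dobrushinCurve {a : ℝ}
    {Φ : Matrix (Fin 2) (Fin 2) ℂ →ₗ[ℂ] Matrix (Fin 2) (Fin 2) ℂ} (hΦ : IsDephasing a Φ)
    {E δ u₁ u₂ u₃ v₁ v₂ v₃ : ℝ} (hu : u₁ ^ 2 + u₂ ^ 2 + u₃ ^ 2 ≤ 1)
    (hv : v₁ ^ 2 + v₂ ^ 2 + v₃ ^ 2 ≤ 1) (hu₃ : u₃ ≤ E) (hv₃ : v₃ ≤ E)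
    (hδ : √((u₁ - v₁) ^ 2 + (u₂ - v₂) ^ 2 + (u₃ - v₃) ^ 2) ≤ δ) :
    √((a * u₁ - a * v₁) ^ 2 + (a * u₂ - a * v₂) ^ 2 + (u₃ - v₃) ^ 2) ≤
      dobrushinCurve Φ pauli3 E δ := by
  have h := traceNorm_le_dobrushinCurve Φ (E := E) (δ := δ) (isDensity_blochState hu)
    (isDensity_blochState hv) (by rwa [re_trace_blochState_mul_pauli3])
    (by rwa [re_trace_blochState_mul_pauli3]) (by rwa [traceNorm_blochState_sub])
  rwa [hΦ.map_blochState, hΦ.map_blochState, traceNorm_blochState_sub] at h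

theorem Real.sin_add_sin_sq_add_cos_add_cos_sq (x y : ℝ) :
    (sin x + sin y) ^ 2 + (cos x + cos y) ^ 2 = 4 * cos ((x - y) / 2) ^ 2 := by
  rw [cos_sq, show 2 * ((x - y) / 2) = x - y by ring, cos_sub]
  linear_combination sin_sq_add_cos_sq x + sin_sq_add_cos_sq y

theorem Real.cos_two_mul_arccos_add_arccos_le {x c : ℝ} (hx : 0 ≤ x) (hc : 0 ≤ c) (hc₁ : c ≤ 1)
    (hxc : x ≤ √(1 - c ^ 2)) : cos (2 * arccos x + arccos c) ≤ -c := by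
  have hcosθ : cos (arccos x) = x :=
    cos_arccos (by linarith) (hxc.trans (sqrt_le_one.2 (by nlinarith)))
  have hφ : arccos c ≤ π / 2 := arccos_le_pi_div_two.2 hc
  have hθφ : π / 2 ≤ arccos x + arccos c := by
    have h : cos (arccos x) ≤ cos (π / 2 - arccos c) := by
      rwa [cos_pi_div_two_sub, sin_arccos, hcosθ]
    have := (strictAntiOn_cos.le_iff_ge ⟨arccos_nonneg _, arccos_le_pi _⟩
      ⟨by linarith, by linarith [arccos_nonneg c]⟩).1 h
    linarith
  have h := cos_add_cos (2 * arccos x + arccos c) (arccos c)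
  rw [show (2 * arccos x + arccos c + arccos c) / 2 = arccos x + arccos c by ring,
    show (2 * arccos x + arccos c - arccos c) / 2 = arccos x by ring, hcosθ,
    cos_arccos (by linarith) hc₁] at h
  nlinarith [cos_nonpos_of_pi_div_two_le_of_le hθφ
    (by linarith [arccos_le_pi_div_two.2 hx] : arccos x + arccos c ≤ π + π / 2)]

theorem stmt_16_general (a : ℝ)
    (Φ : Matrix (Fin 2) (Fin 2) ℂ →ₗ[ℂ] Matrix (Fin 2) (Fin 2) ℂ) (hΦ : IsDephasing a Φ)
    (E : ℝ) (hE : E ∈ Set.Icc (-1 : ℝ) 0)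
    (δ : ℝ) (hδ0 : Real.sqrt (2 * (1 - (-E))) ≤ δ)
    (hδ1 : δ ≤ 2 * Real.sqrt (1 - (-E) ^ 2)) :
    Real.sqrt (((-E) + Real.cos (2 * Real.arccos (δ / 2) + Real.arccos (-E))) ^ 2 +
        a ^ 2 * (Real.sqrt (1 - (-E) ^ 2) +
          Real.sin (2 * Real.arccos (δ / 2) + Real.arccos (-E))) ^ 2) ≤
      dobrushinCurve (⇑Φ) pauli3 E δ := by
  obtain ⟨hE₁, hE₀⟩ := hE
  have hδ : 0 ≤ δ := (sqrt_nonneg _).trans hδ0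
  have hδ1' : δ / 2 ≤ √(1 - (-E) ^ 2) := by linarith
  have hE_ψ := cos_two_mul_arccos_add_arccos_le (by linarith) (by linarith) (by linarith) hδ1'
  set θ := arccos (δ / 2)
  set φ := arccos (-E)
  have hcosθ : cos θ = δ / 2 :=
    cos_arccos (by linarith) (hδ1'.trans (sqrt_le_one.2 (by nlinarith)))
  have hcosφ : cos φ = -E := cos_arccos (by linarith) (by linarith)
  have hsinφ : sin φ = √(1 - (-E) ^ 2) := sin_arccos _
  have hdist : √((-sin (2 * θ + φ) - sin φ) ^ 2 + (0 - 0) ^ 2 +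
      (cos (2 * θ + φ) - -cos φ) ^ 2) ≤ δ := by
    rw [show (-sin (2 * θ + φ) - sin φ) ^ 2 + (0 - 0) ^ 2 + (cos (2 * θ + φ) - -cos φ) ^ 2 =
      (sin (2 * θ + φ) + sin φ) ^ 2 + (cos (2 * θ + φ) + cos φ) ^ 2 by ring,
      sin_add_sin_sq_add_cos_add_cos_sq, show (2 * θ + φ - φ) / 2 = θ by ring, hcosθ,
      show 4 * (δ / 2) ^ 2 = δ ^ 2 by ring, sqrt_sq hδ]
  have h := hΦ.le_dobrushinCurve (E := E) (by nlinarith [sin_sq_add_cos_sq (2 * θ + φ)])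
    (by nlinarith [sin_sq_add_cos_sq φ]) (by linarith) (by linarith) hdist
  convert h using 2
  rw [hcosφ, hsinφ]
  ring

/-- Regime III lower bound for the Dobrushin curve of the dephasing channel with `H = σ₃`,
`E ∈ [−1,0]` and `√(2(1 − |E|)) ≤ δ ≤ 2√(1 − |E|²)`: `F_E(δ) ≥ h_E(δ)` where
`h_E(δ) = √[(|E| + cos(2 arccos(δ/2) + arccos|E|))² + a²(√(1 − |E|²) + sin(2 arccos(δ/2) +
arccos|E|))²]`. -/
theorem stmt_16 (a : ℝ) (ha : a ∈ Set.Icc (0 : ℝ) 1)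
    (Φ : Matrix (Fin 2) (Fin 2) ℂ →ₗ[ℂ] Matrix (Fin 2) (Fin 2) ℂ) (hΦ : IsDephasing a Φ)
    (E : ℝ) (hE : E ∈ Set.Icc (-1 : ℝ) 0)
    (δ : ℝ) (hδ0 : Real.sqrt (2 * (1 - (-E))) ≤ δ)
    (hδ1 : δ ≤ 2 * Real.sqrt (1 - (-E) ^ 2)) :
    Real.sqrt (((-E) + Real.cos (2 * Real.arccos (δ / 2) + Real.arccos (-E))) ^ 2 +
        a ^ 2 * (Real.sqrt (1 - (-E) ^ 2) +
          Real.sin (2 * Real.arccos (δ / 2) + Real.arccos (-E))) ^ 2) ≤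
      dobrushinCurve (⇑Φ) pauli3 E δ :=
  stmt_16_general a Φ hΦ E hE δ hδ0 hδ1
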